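/- Two finite mixtures of univariate Gaussian densities with positive weights and pairwise distinct parameter pairs are equal as functions on ℝ if and only if they have the same number of components and, after sorting components in the increasing convex order (by standard deviation, then mean), the weight, mean, and standard deviation of each corresponding component agree. -/

import Mathlib

open Real Filter

/-- The univariate Gaussian probability density function with mean `μ` and
standard deviation `σ`. -/
noncomputable def gaussPdf (μ σ x : ℝ) : ℝ :=
  (2 * π * σ ^ 2) ^ (-(1 : ℝ) / 2) * Real.exp (-(x - μ) ^ 2 / (2 * σ ^ 2))

lemma gaussPdf_pos (μ : ℝ) {σ : ℝ} (hσ : 0 < σ) (x : ℝ) : 0 < gaussPdf μ σ x := by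
  unfold gaussPdf
  have h1 : (0:ℝ) < 2 * π * σ ^ 2 :=
    mul_pos (mul_pos two_pos pi_pos) (pow_pos hσ 2)
  exact mul_pos (Real.rpow_pos_of_pos h1 _) (Real.exp_pos _)

lemma lin_atBot {b : ℝ} (hb : b < 0) (c : ℝ) :
    Tendsto (fun x : ℝ => b * x + c) atTop atBot := by
  apply tendsto_atBot_add_const_right
  exact (tendsto_const_mul_atBot_of_neg hb).2 tendsto_id

lemma quad_atBot {a : ℝ} (ha : a < 0) (b c : ℝ) :
    Tendsto (fun x : ℝ => a * x ^ 2 + b * x + c) atTop atBot := by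
  have h : ∀ x : ℝ, a * x ^ 2 + b * x + c = x * (a * x + b) + c := by
    intro x; ring
  simp only [h]
  apply tendsto_atBot_add_const_right
  exact Tendsto.atTop_mul_atBot₀ tendsto_id
    (tendsto_atBot_add_const_right _ b ((tendsto_const_mul_atBot_of_neg ha).2 tendsto_id))

lemma ratio_tendsto_zero {μ σ ν τ : ℝ} (hσ : 0 < σ) (hτ : 0 < τ)
    (h : σ < τ ∨ (σ = τ ∧ μ < ν)) :
    Tendsto (fun x => gaussPdf μ σ x / gaussPdf ν τ x) atTop (nhds 0) := by
  have hσ2 : (σ:ℝ) ^ 2 ≠ 0 := by positivity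
  have hτ2 : (τ:ℝ) ^ 2 ≠ 0 := by positivity
  set a : ℝ := 1 / (2 * τ ^ 2) - 1 / (2 * σ ^ 2) with ha_def
  set b : ℝ := μ / σ ^ 2 - ν / τ ^ 2 with hb_def
  set c : ℝ := ν ^ 2 / (2 * τ ^ 2) - μ ^ 2 / (2 * σ ^ 2) with hc_def
  have key : ∀ x : ℝ, gaussPdf μ σ x / gaussPdf ν τ x =
      ((2 * π * σ ^ 2) ^ (-(1:ℝ)/2) / (2 * π * τ ^ 2) ^ (-(1:ℝ)/2)) *
        Real.exp (a * x ^ 2 + b * x + c) := by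
    intro x
    unfold gaussPdf
    rw [mul_div_mul_comm, ← Real.exp_sub]
    congr 1
    rw [ha_def, hb_def, hc_def]
    field_simp
    ring
  simp only [key]
  rw [show (0:ℝ) = ((2 * π * σ ^ 2) ^ (-(1:ℝ)/2) / (2 * π * τ ^ 2) ^ (-(1:ℝ)/2)) * 0 by ring]
  apply Tendsto.const_mul
  have habot : Tendsto (fun x : ℝ => a * x ^ 2 + b * x + c) atTop atBot := by
    rcases h with h | ⟨h1, h2⟩
    · apply quad_atBot _ b c
      rw [ha_def]
      have h2 : 2 * σ ^ 2 < 2 * τ ^ 2 := by nlinarith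
      have h3 : 1 / (2 * τ ^ 2) < 1 / (2 * σ ^ 2) :=
        one_div_lt_one_div_of_lt (by positivity) h2
      linarith
    · have haz : a = 0 := by rw [ha_def, h1]; ring
      have hbneg : b < 0 := by
        rw [hb_def, h1]
        have hτp : (0:ℝ) < τ ^ 2 := by positivity
        have : μ / τ ^ 2 < ν / τ ^ 2 := (div_lt_div_iff_of_pos_right hτp).2 h2
        linarith
      simp only [haz, zero_mul, zero_add]
      exact lin_atBot hbneg c
  exact Real.tendsto_exp_atBot.comp habot

lemma sumratio_zero {n : ℕ} (p μ σ : Fin n → ℝ) {M S : ℝ}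
    (hσ : ∀ i, 0 < σ i) (hS : 0 < S)
    (h : ∀ i, σ i < S ∨ (σ i = S ∧ μ i < M)) :
    Tendsto (fun x => ∑ i, p i * gaussPdf (μ i) (σ i) x / gaussPdf M S x)
      atTop (nhds 0) := by
  have : Tendsto (fun x => ∑ i, p i * (gaussPdf (μ i) (σ i) x / gaussPdf M S x))
      atTop (nhds (∑ i : Fin n, p i * 0)) := by
    apply tendsto_finset_sum
    intro i _
    exact (ratio_tendsto_zero (hσ i) hS (h i)).const_mul (p i)
  simpa [mul_div_assoc] using this

lemma sumratio_top {n : ℕ} (p μ σ : Fin (n + 1) → ℝ)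
    (hσ : ∀ i, 0 < σ i)
    (hsort : ∀ i j : Fin (n + 1), i < j → σ i < σ j ∨ (σ i = σ j ∧ μ i < μ j)) :
    Tendsto (fun x => (∑ i, p i * gaussPdf (μ i) (σ i) x) /
        gaussPdf (μ (Fin.last n)) (σ (Fin.last n)) x)
      atTop (nhds (p (Fin.last n))) := by
  have key : ∀ x : ℝ, (∑ i, p i * gaussPdf (μ i) (σ i) x) /
      gaussPdf (μ (Fin.last n)) (σ (Fin.last n)) x =
      (∑ i : Fin n, p i.castSucc * gaussPdf (μ i.castSucc) (σ i.castSucc) x /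
        gaussPdf (μ (Fin.last n)) (σ (Fin.last n)) x) + p (Fin.last n) := by
    intro x
    rw [Fin.sum_univ_castSucc, add_div, Finset.sum_div, mul_div_assoc,
      div_self (gaussPdf_pos _ (hσ (Fin.last n)) x).ne', mul_one]
  simp only [key]
  have h0 : Tendsto (fun x => ∑ i : Fin n,
      p i.castSucc * gaussPdf (μ i.castSucc) (σ i.castSucc) x /
        gaussPdf (μ (Fin.last n)) (σ (Fin.last n)) x) atTop (nhds 0) := by
    apply sumratio_zero _ _ _ (fun i => hσ _) (hσ (Fin.last n))
    intro i
    exact hsort i.castSucc (Fin.last n) (Fin.castSucc_lt_last i)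
  simpa using h0.add tendsto_const_nhds

/-- transitivity of the strict order on (μ, σ) pairs -/
lemma olt_trans {μ1 σ1 μ2 σ2 μ3 σ3 : ℝ}
    (h1 : σ1 < σ2 ∨ (σ1 = σ2 ∧ μ1 < μ2)) (h2 : σ2 < σ3 ∨ (σ2 = σ3 ∧ μ2 < μ3)) :
    σ1 < σ3 ∨ (σ1 = σ3 ∧ μ1 < μ3) := by
  rcases h1 with h1 | ⟨e1, l1⟩ <;> rcases h2 with h2 | ⟨e2, l2⟩
  · exact Or.inl (h1.trans h2)
  · exact Or.inl (e2 ▸ h1)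
  · exact Or.inl (e1 ▸ h2)
  · exact Or.inr ⟨e1.trans e2, l1.trans l2⟩

lemma key_lemma : ∀ n m : ℕ, ∀ p μ σ : Fin n → ℝ, ∀ q ν τ : Fin m → ℝ,
    (∀ i, 0 < σ i) → (∀ j, 0 < τ j) → (∀ i, 0 < p i) → (∀ j, 0 < q j) →
    (∀ i j : Fin n, i < j → σ i < σ j ∨ (σ i = σ j ∧ μ i < μ j)) →
    (∀ i j : Fin m, i < j → τ i < τ j ∨ (τ i = τ j ∧ ν i < ν j)) →
    (∀ x, ∑ i, p i * gaussPdf (μ i) (σ i) x = ∑ j, q j * gaussPdf (ν j) (τ j) x) →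
    ∃ h : n = m, ∀ i : Fin n,
      p i = q (Fin.cast h i) ∧ μ i = ν (Fin.cast h i) ∧ σ i = τ (Fin.cast h i) := by
  intro n
  induction n with
  | zero =>
    intro m p μ σ q ν τ hσ hτ hp hq hs1 hs2 heq
    match m with
    | 0 => exact ⟨rfl, fun i => i.elim0⟩
    | m' + 1 =>
      exfalso
      have h := (heq 0).symm
      simp only [Finset.univ_eq_empty, Finset.sum_empty] at h
      have : 0 < ∑ j, q j * gaussPdf (ν j) (τ j) 0 :=
        Finset.sum_pos (fun j _ => mul_pos (hq j) (gaussPdf_pos _ (hτ j) 0))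
          Finset.univ_nonempty
      rw [h] at this
      exact lt_irrefl 0 this
  | succ n' ih =>
    intro m p μ σ q ν τ hσ hτ hp hq hs1 hs2 heq
    match m with
    | 0 =>
      exfalso
      have h := heq 0
      simp only [Finset.univ_eq_empty, Finset.sum_empty] at h
      have : 0 < ∑ i, p i * gaussPdf (μ i) (σ i) 0 :=
        Finset.sum_pos (fun i _ => mul_pos (hp i) (gaussPdf_pos _ (hσ i) 0))
          Finset.univ_nonempty
      rw [h] at this
      exact lt_irrefl 0 this
    | m' + 1 =>
      -- compare top components
      set L := Fin.last n'
      set Lm := Fin.last m'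
      -- left limit at own top
      have hLlim : Tendsto (fun x => (∑ i, p i * gaussPdf (μ i) (σ i) x) /
          gaussPdf (μ L) (σ L) x) atTop (nhds (p L)) :=
        sumratio_top p μ σ hσ hs1
      have hRlim : Tendsto (fun x => (∑ j, q j * gaussPdf (ν j) (τ j) x) /
          gaussPdf (ν Lm) (τ Lm) x) atTop (nhds (q Lm)) :=
        sumratio_top q ν τ hτ hs2
      -- case: left top strictly less than right top
      have not_lt_left : ¬ (σ L < τ Lm ∨ (σ L = τ Lm ∧ μ L < ν Lm)) := by
        intro hlt
        have hall : ∀ i : Fin (n' + 1),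
            σ i < τ Lm ∨ (σ i = τ Lm ∧ μ i < ν Lm) := by
          intro i
          rcases eq_or_lt_of_le (Fin.le_last i) with h | h
          · rw [show i = L from h ▸ rfl]; exact hlt
          · exact olt_trans (hs1 i L h) hlt
        have h0 : Tendsto (fun x => (∑ i, p i * gaussPdf (μ i) (σ i) x) /
            gaussPdf (ν Lm) (τ Lm) x) atTop (nhds 0) := by
          have := sumratio_zero p μ σ hσ (hτ Lm) hall
          simpa [Finset.sum_div, mul_div_assoc] using this
        have := tendsto_nhds_unique
          (h0.congr (fun x => by rw [heq x])) hRlim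
        exact absurd this.symm (ne_of_gt (hq Lm))
      have not_lt_right : ¬ (τ Lm < σ L ∨ (τ Lm = σ L ∧ ν Lm < μ L)) := by
        intro hlt
        have hall : ∀ j : Fin (m' + 1),
            τ j < σ L ∨ (τ j = σ L ∧ ν j < μ L) := by
          intro j
          rcases eq_or_lt_of_le (Fin.le_last j) with h | h
          · rw [show j = Lm from h ▸ rfl]; exact hlt
          · exact olt_trans (hs2 j Lm h) hlt
        have h0 : Tendsto (fun x => (∑ j, q j * gaussPdf (ν j) (τ j) x) /
            gaussPdf (μ L) (σ L) x) atTop (nhds 0) := by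
          have := sumratio_zero q ν τ hτ (hσ L) hall
          simpa [Finset.sum_div, mul_div_assoc] using this
        have := tendsto_nhds_unique
          (h0.congr (fun x => by rw [← heq x])) hLlim
        exact absurd this.symm (ne_of_gt (hp L))
      -- hence tops are equal
      have hσeq : σ L = τ Lm := by
        rcases lt_trichotomy (σ L) (τ Lm) with h | h | h
        · exact absurd (Or.inl h) not_lt_left
        · exact h
        · exact absurd (Or.inl h) not_lt_right
      have hμeq : μ L = ν Lm := by
        rcases lt_trichotomy (μ L) (ν Lm) with h | h | h
        · exact absurd (Or.inr ⟨hσeq, h⟩) not_lt_left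
        · exact h
        · exact absurd (Or.inr ⟨hσeq.symm, h⟩) not_lt_right
      -- weights equal
      have hpeq : p L = q Lm := by
        have hRlim' : Tendsto (fun x => (∑ j, q j * gaussPdf (ν j) (τ j) x) /
            gaussPdf (μ L) (σ L) x) atTop (nhds (q Lm)) := by
          rw [hμeq, hσeq]; exact hRlim
        exact tendsto_nhds_unique (hLlim.congr (fun x => by rw [heq x])) hRlim'
      -- cancel top components
      have heq' : ∀ x, ∑ i : Fin n', p i.castSucc * gaussPdf (μ i.castSucc) (σ i.castSucc) x =
          ∑ j : Fin m', q j.castSucc * gaussPdf (ν j.castSucc) (τ j.castSucc) x := by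
        intro x
        have h := heq x
        rw [Fin.sum_univ_castSucc, Fin.sum_univ_castSucc] at h
        have htop : p L * gaussPdf (μ L) (σ L) x = q Lm * gaussPdf (ν Lm) (τ Lm) x := by
          rw [hpeq, hμeq, hσeq]
        linarith [h, htop]
      obtain ⟨h', hcomp⟩ := ih m' (fun i => p i.castSucc) (fun i => μ i.castSucc)
        (fun i => σ i.castSucc) (fun j => q j.castSucc) (fun j => ν j.castSucc)
        (fun j => τ j.castSucc) (fun i => hσ _) (fun j => hτ _) (fun i => hp _)
        (fun j => hq _)
        (fun i j hij => hs1 i.castSucc j.castSucc (by simpa using hij))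
        (fun i j hij => hs2 i.castSucc j.castSucc (by simpa using hij))
        heq'
      have hnm : n' + 1 = m' + 1 := by omega
      refine ⟨hnm, fun i => ?_⟩
      refine Fin.lastCases ?_ ?_ i
      · have hc : Fin.cast hnm (Fin.last n') = Fin.last m' := by
          ext; simp [h']
        rw [hc]
        exact ⟨hpeq, hμeq, hσeq⟩
      · intro j
        have hc : Fin.cast hnm j.castSucc = (Fin.cast h' j).castSucc := by
          ext; simp
        rw [hc]
        exact hcomp j

/-- Two finite mixtures of univariate Gaussian densities with positive weights,
whose components are (strictly) sorted in the increasing convex order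
(by standard deviation, then mean; this also forces the parameter pairs to be
pairwise distinct), are equal as functions on ℝ iff they have the same number of
components and corresponding weights, means and standard deviations agree. -/
theorem mixture_unique_params (n m : ℕ) (p μ σ : Fin n → ℝ) (q ν τ : Fin m → ℝ)
    (hσ : ∀ i, 0 < σ i) (hτ : ∀ j, 0 < τ j)
    (hp : ∀ i, 0 < p i) (hq : ∀ j, 0 < q j)
    (hps : ∑ i, p i = 1) (hqs : ∑ j, q j = 1)
    (hsort1 : ∀ i j : Fin n, i < j → σ i < σ j ∨ (σ i = σ j ∧ μ i < μ j))
    (hsort2 : ∀ i j : Fin m, i < j → τ i < τ j ∨ (τ i = τ j ∧ ν i < ν j)) :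
    (∀ x, ∑ i, p i * gaussPdf (μ i) (σ i) x = ∑ j, q j * gaussPdf (ν j) (τ j) x) ↔
      ∃ h : n = m, ∀ i : Fin n,
        p i = q (Fin.cast h i) ∧ μ i = ν (Fin.cast h i) ∧ σ i = τ (Fin.cast h i) := by
  constructor
  · intro heq
    exact key_lemma n m p μ σ q ν τ hσ hτ hp hq hsort1 hsort2 heq
  · rintro ⟨h, hcomp⟩ x
    subst h
    apply Finset.sum_congr rfl
    intro i _
    obtain ⟨h1, h2, h3⟩ := hcomp i
    have hci : Fin.cast rfl i = i := rfl
    rw [hci] at h1 h2 h3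
    rw [h1, h2, h3]
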